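/- Let G be a Lie group and π : G → B(Y)ˣ a strongly continuous uniformly bounded representation on a Banach space Y, with contragredient π* on Y*. If the orbit map g ↦ π*(g)ξ is of class C^k (k ≥ 1) in the norm topology of Y*, then ξ belongs to the domain of dπ(X_{j₁})* ⋯ dπ(X_{j_k})* for every choice of indices j₁,…,j_k ∈ {1,…,m}, where {X₁,…,X_m} is any basis of the Lie algebra 𝔤 of G and dπ(X) denotes the generator of the one-parameter group t ↦ π(exp_G(tX)). -/

import Mathlib

/-!
Write `F_ξ g = π*(g) ξ`. If `F_ξ` is `C^(n+1)`, testing the derivative of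
`t ↦ F_ξ (exp t X)` at `0` against `x ∈ D(dπ X)` shows that `ξ ∈ D(dπ(X)*)` with
`dπ(X)* ξ = -d/dt|₀ F_ξ (exp t X)`. Since `F_ξ (g * h) = π*(g) (F_ξ h)`, the orbit map of
`dπ(X)* ξ` is `g ↦ -d/dt|₀ F_ξ (g * exp t X)`, the derivative of `F_ξ` along the
left-invariant vector field `X`, hence `C^n`. Induction on the number of adjoints then gives
the claim.
-/

open NormedSpace

noncomputable section

/-- The Banach-space adjoint (transpose) of a bounded operator, acting on the dual. -/
def contraDual {Y : Type*} [NormedAddCommGroup Y] [NormedSpace ℂ Y]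
    (T : Y →L[ℂ] Y) : StrongDual ℂ Y →L[ℂ] StrongDual ℂ Y :=
  (ContinuousLinearMap.compL ℂ Y Y ℂ).flip T

/-- The domain of the Banach-space adjoint `A*` of an unbounded operator `A` on `Y`:
those `ξ ∈ Y*` for which there is `η ∈ Y*` with `η (x) = ξ (A x)` for all `x ∈ D(A)`. -/
def adjDomain {Y : Type*} [NormedAddCommGroup Y] [NormedSpace ℂ Y]
    (A : Y →ₗ.[ℂ] Y) : Set (StrongDual ℂ Y) :=
  {ξ | ∃ η : StrongDual ℂ Y, ∀ x : A.domain, η (x : Y) = ξ (A x)}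

/-- The value `A* ξ` of the Banach-space adjoint (unique when `A` is densely defined),
with junk value `0` outside the domain of `A*`. -/
def adjApply {Y : Type*} [NormedAddCommGroup Y] [NormedSpace ℂ Y]
    (A : Y →ₗ.[ℂ] Y) (ξ : StrongDual ℂ Y) : StrongDual ℂ Y :=
  @dite _ (ξ ∈ adjDomain A) (Classical.dec _) (fun h => h.choose) fun _ => 0

/-- `iterAdjMem A [j₁, …, j_k] ξ` says that `ξ` belongs to the domain of the composition
`A j_k* ⋯ A j₁*` of the adjoints (the adjoint indexed by the head being applied first). -/
def iterAdjMem {Y : Type*} [NormedAddCommGroup Y] [NormedSpace ℂ Y] {m : ℕ}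
    (A : Fin m → (Y →ₗ.[ℂ] Y)) : List (Fin m) → StrongDual ℂ Y → Prop
  | [], _ => True
  | j :: l, ξ => ξ ∈ adjDomain (A j) ∧ iterAdjMem A l (adjApply (A j) ξ)

open scoped Manifold ContDiff

section DerivAlongCurve

variable {E : Type*} [NormedAddCommGroup E] [NormedSpace ℝ E]
  {H : Type*} [TopologicalSpace H] {I : ModelWithCorners ℝ E H}
  {G : Type*} [TopologicalSpace G] [ChartedSpace H G] [Monoid G]
  {W : Type*} [NormedAddCommGroup W] [NormedSpace ℝ W]

theorem ContMDiff.deriv_mul_curve {m n : ℕ∞ω} [ContMDiffMul I m G] (hmn : n + 1 ≤ m)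
    {Φ : G → W} (hΦ : ContMDiff I 𝓘(ℝ, W) m Φ) {c : ℝ → G} (hc : ContMDiff 𝓘(ℝ) I m c)
    (t₀ : ℝ) : ContMDiff I 𝓘(ℝ, W) n fun g => deriv (fun t => Φ (g * c t)) t₀ := by
  have hjoint : ContMDiff (I.prod 𝓘(ℝ)) 𝓘(ℝ, W) m
      (Function.uncurry fun g t => Φ (g * c t)) :=
    hΦ.comp (contMDiff_fst.mul (hc.comp contMDiff_snd))
  have : IsManifold I 1 G := .of_le (le_add_self.trans hmn)
  intro g
  have hfderiv := ContMDiffAt.mfderiv (x₀ := g) (fun g t => Φ (g * c t)) (fun _ => t₀)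
    hjoint.contMDiffAt contMDiffAt_const hmn
  erw [inTangentCoordinates_model_space] at hfderiv
  simp only [mfderiv_eq_fderiv] at hfderiv
  simpa only [fderiv_apply_one_eq_deriv] using
    hfderiv.clm_apply (contMDiffAt_const (c := (1 : ℝ)))

end DerivAlongCurve

section Contragredient

variable {Y : Type*} [NormedAddCommGroup Y] [NormedSpace ℂ Y]

lemma HasDerivAt.continuousLinearMap_comp {F : Type*} [NormedAddCommGroup F]
    [NormedSpace ℂ F] (L : Y →L[ℂ] F) {c : ℝ → Y} {c' : Y} {t : ℝ} (hc : HasDerivAt c c' t) :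
    HasDerivAt (fun s => L (c s)) (L c') t :=
  (L.restrictScalars ℝ).hasFDerivAt.comp_hasDerivAt t hc

lemma contraDual_apply (T : Y →L[ℂ] Y) (ξ : StrongDual ℂ Y) (x : Y) :
    contraDual T ξ x = ξ (T x) :=
  rfl

lemma contraDual_mul (S T : Y →L[ℂ] Y) (ξ : StrongDual ℂ Y) :
    contraDual (S * T) ξ = contraDual T (contraDual S ξ) :=
  rfl

lemma adjApply_eq_of_forall {A : Y →ₗ.[ℂ] Y} (hA : Dense (A.domain : Set Y))
    {ξ η : StrongDual ℂ Y} (h : ∀ x : A.domain, η x = ξ (A x)) : adjApply A ξ = η := by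
  have hξ : ξ ∈ adjDomain A := ⟨η, h⟩
  rw [adjApply, dif_pos hξ]
  refine ContinuousLinearMap.coeFn_injective <|
    Continuous.ext_on hA hξ.choose.continuous η.continuous fun x hx => ?_
  rw [hξ.choose_spec ⟨x, hx⟩, h ⟨x, hx⟩]

variable {G : Type*} [Group G]

def dualOrbit (π : G →* (Y →L[ℂ] Y)ˣ) (ξ : StrongDual ℂ Y) (g : G) : StrongDual ℂ Y :=
  contraDual (π g⁻¹ : Y →L[ℂ] Y) ξ

lemma dualOrbit_mul (π : G →* (Y →L[ℂ] Y)ˣ) (ξ : StrongDual ℂ Y) (g h : G) :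
    dualOrbit π ξ (g * h) = contraDual (π g⁻¹ : Y →L[ℂ] Y) (dualOrbit π ξ h) := by
  simp only [dualOrbit, mul_inv_rev, map_mul, Units.val_mul, contraDual_mul]

lemma inv_eq_of_map_add {γ : ℝ → G} (hγ0 : γ 0 = 1) (hγadd : ∀ s t, γ (s + t) = γ s * γ t)
    (t : ℝ) : (γ t)⁻¹ = γ (-t) :=
  inv_eq_of_mul_eq_one_right <| by rw [← hγadd, add_neg_cancel, hγ0]

variable {π : G →* (Y →L[ℂ] Y)ˣ} {γ : ℝ → G} {A : Y →ₗ.[ℂ] Y}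

lemma hasDerivAt_dualOrbit_apply_of_mem_domain (hγ0 : γ 0 = 1)
    (hγadd : ∀ s t, γ (s + t) = γ s * γ t)
    (hgen : ∀ x : A.domain, HasDerivAt (fun t => (π (γ t) : Y →L[ℂ] Y) x) (A x) 0)
    (ξ : StrongDual ℂ Y) (x : A.domain) :
    HasDerivAt (fun t => dualOrbit π ξ (γ t) x) (-ξ (A x)) 0 := by
  have hreflect : HasDerivAt (fun t => (π (γ (-t)) : Y →L[ℂ] Y) x) (-A x) 0 := by
    simpa [Function.comp_def] using
      (hgen x).scomp_of_eq (0 : ℝ) (hasDerivAt_neg' 0) neg_zero.symm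
  simpa [dualOrbit, contraDual_apply, inv_eq_of_map_add hγ0 hγadd] using
    hreflect.continuousLinearMap_comp ξ

lemma mem_adjDomain_and_adjApply_eq_of_hasDerivAt (hγ0 : γ 0 = 1)
    (hγadd : ∀ s t, γ (s + t) = γ s * γ t)
    (hA : Dense (A.domain : Set Y))
    (hgen : ∀ x : A.domain, HasDerivAt (fun t => (π (γ t) : Y →L[ℂ] Y) x) (A x) 0)
    {ξ D : StrongDual ℂ Y} (hD : HasDerivAt (fun t => dualOrbit π ξ (γ t)) D 0) :
    ξ ∈ adjDomain A ∧ adjApply A ξ = -D := by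
  have hD_apply (x : A.domain) : -D x = ξ (A x) := by
    have hD_x := hD.continuousLinearMap_comp (ContinuousLinearMap.apply ℂ ℂ (x : Y))
    simp only [ContinuousLinearMap.apply_apply] at hD_x
    rw [hD_x.unique (hasDerivAt_dualOrbit_apply_of_mem_domain hγ0 hγadd hgen ξ x), neg_neg]
  exact ⟨⟨-D, hD_apply⟩, adjApply_eq_of_forall hA hD_apply⟩

lemma dualOrbit_adjApply_eq_neg_deriv (hγ0 : γ 0 = 1) (hγadd : ∀ s t, γ (s + t) = γ s * γ t)
    (hA : Dense (A.domain : Set Y))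
    (hgen : ∀ x : A.domain, HasDerivAt (fun t => (π (γ t) : Y →L[ℂ] Y) x) (A x) 0)
    {ξ D : StrongDual ℂ Y} (hD : HasDerivAt (fun t => dualOrbit π ξ (γ t)) D 0) (g : G) :
    dualOrbit π (adjApply A ξ) g = -deriv (fun t => dualOrbit π ξ (g * γ t)) 0 := by
  have hD_g : HasDerivAt (fun t => dualOrbit π ξ (g * γ t))
      (contraDual (π g⁻¹ : Y →L[ℂ] Y) D) 0 := by
    simpa only [dualOrbit_mul] using
      hD.continuousLinearMap_comp (contraDual (π g⁻¹ : Y →L[ℂ] Y))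
  rw [hD_g.deriv, (mem_adjDomain_and_adjApply_eq_of_hasDerivAt hγ0 hγadd hA hgen hD).2,
    dualOrbit, map_neg]

end Contragredient

section Smoothness

variable {Y : Type*} [NormedAddCommGroup Y] [NormedSpace ℂ Y]
  {E : Type*} [NormedAddCommGroup E] [NormedSpace ℝ E]
  {H : Type*} [TopologicalSpace H] {I : ModelWithCorners ℝ E H}
  {G : Type*} [TopologicalSpace G] [ChartedSpace H G] [Group G]
  {π : G →* (Y →L[ℂ] Y)ˣ}

theorem mem_adjDomain_and_contMDiff_dualOrbit_adjApply {m n : ℕ∞ω} [ContMDiffMul I m G]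
    (hmn : n + 1 ≤ m)
    {γ : ℝ → G} (hγ0 : γ 0 = 1) (hγadd : ∀ s t, γ (s + t) = γ s * γ t)
    (hγ : ContMDiff 𝓘(ℝ) I m γ) {A : Y →ₗ.[ℂ] Y} (hA : Dense (A.domain : Set Y))
    (hgen : ∀ x : A.domain, HasDerivAt (fun t => (π (γ t) : Y →L[ℂ] Y) x) (A x) 0)
    {ξ : StrongDual ℂ Y} (hξ : ContMDiff I 𝓘(ℝ, StrongDual ℂ Y) m (dualOrbit π ξ)) :
    ξ ∈ adjDomain A ∧ ContMDiff I 𝓘(ℝ, StrongDual ℂ Y) n (dualOrbit π (adjApply A ξ)) := by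
  have hcurve : ContDiff ℝ m fun t => dualOrbit π ξ (γ t) :=
    contMDiff_iff_contDiff.mp (hξ.comp hγ)
  have hm : m ≠ 0 := (zero_lt_one.trans_le (le_add_self.trans hmn)).ne'
  have hD := (hcurve.differentiable hm 0).hasDerivAt
  refine ⟨(mem_adjDomain_and_adjApply_eq_of_hasDerivAt hγ0 hγadd hA hgen hD).1, ?_⟩
  rw [funext (dualOrbit_adjApply_eq_neg_deriv hγ0 hγadd hA hgen hD)]
  exact (hξ.deriv_mul_curve hmn hγ 0).neg

theorem iterAdjMem_of_contMDiff_dualOrbit [ContMDiffMul I ∞ G] {m : ℕ} {γ : Fin m → ℝ → G}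
    (hγ0 : ∀ j, γ j 0 = 1) (hγadd : ∀ j s t, γ j (s + t) = γ j s * γ j t)
    (hγ : ∀ j, ContMDiff 𝓘(ℝ) I ∞ (γ j)) {A : Fin m → (Y →ₗ.[ℂ] Y)}
    (hA : ∀ j, Dense ((A j).domain : Set Y))
    (hgen : ∀ (j) (x : (A j).domain),
      HasDerivAt (fun t => (π (γ j t) : Y →L[ℂ] Y) (x : Y)) (A j x) 0)
    (l : List (Fin m)) {ξ : StrongDual ℂ Y}
    (hξ : ContMDiff I 𝓘(ℝ, StrongDual ℂ Y) l.length (dualOrbit π ξ)) : iterAdjMem A l ξ := by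
  induction l generalizing ξ with
  | nil => trivial
  | cons j l ih =>
    obtain ⟨hmem, hnext⟩ := mem_adjDomain_and_contMDiff_dualOrbit_adjApply (n := l.length)
      (by norm_cast) (hγ0 j) (hγadd j) ((hγ j).of_le ENat.LEInfty.out) (hA j) (hgen j) hξ
    exact ⟨hmem, ih hnext⟩

end Smoothness

theorem stmt15_general {Y : Type*} [NormedAddCommGroup Y] [NormedSpace ℂ Y]
    {E : Type*} [NormedAddCommGroup E] [NormedSpace ℝ E]
    {HM : Type*} [TopologicalSpace HM] (I : ModelWithCorners ℝ E HM)
    {G : Type*} [TopologicalSpace G] [ChartedSpace HM G] [Group G] [LieGroup I (⊤ : ℕ∞) G]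
    (π : G →* (Y →L[ℂ] Y)ˣ)
    {m : ℕ} (γ : Fin m → ℝ → G)
    (hγ0 : ∀ j, γ j 0 = 1) (hγadd : ∀ j s t, γ j (s + t) = γ j s * γ j t)
    (hγsmooth : ∀ j, ContMDiff (modelWithCornersSelf ℝ ℝ) I (⊤ : ℕ∞) (γ j))
    (A : Fin m → (Y →ₗ.[ℂ] Y))
    (hdense : ∀ j, Dense ((A j).domain : Set Y))
    (hgen : ∀ (j) (x : (A j).domain),
      HasDerivAt (fun t => (π (γ j t) : Y →L[ℂ] Y) (x : Y)) (A j x) 0)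
    (ξ : StrongDual ℂ Y) (k : ℕ)
    (hCk : ContMDiff I (modelWithCornersSelf ℝ (StrongDual ℂ Y)) k
      (fun g => contraDual (π g⁻¹ : Y →L[ℂ] Y) ξ)) :
    ∀ l : List (Fin m), l.length = k → iterAdjMem A l ξ := by
  rintro l rfl
  exact iterAdjMem_of_contMDiff_dualOrbit hγ0 hγadd hγsmooth hdense hgen l hCk

/-- let `G` be a Lie group and `π` a strongly continuous uniformly bounded
representation of `G` on a Banach space `Y`.  The basis `X₁, …, X_m` of the Lie algebra of
`G` is presented through the smooth one-parameter subgroups `γ j (t) = exp_G (t X_j)`, and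
`A j = dπ(X_j)` is the infinitesimal generator of the strongly continuous one-parameter
group `t ↦ π (γ j t)`.  If the orbit map `g ↦ π* (g) ξ` of the contragredient
representation is of class `C^k` (`k ≥ 1`) in the norm topology of `Y*`, then `ξ` belongs
to the domain of `dπ(X_{j₁})* ⋯ dπ(X_{j_k})*` for every choice of indices
`j₁, …, j_k ∈ {1, …, m}`. -/
theorem stmt15 {Y : Type*} [NormedAddCommGroup Y] [NormedSpace ℂ Y] [CompleteSpace Y]
    {E : Type*} [NormedAddCommGroup E] [NormedSpace ℝ E]
    {HM : Type*} [TopologicalSpace HM] (I : ModelWithCorners ℝ E HM)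
    {G : Type*} [TopologicalSpace G] [ChartedSpace HM G] [Group G] [LieGroup I (⊤ : ℕ∞) G]
    (π : G →* (Y →L[ℂ] Y)ˣ)
    (hπc : ∀ x : Y, Continuous fun g => (π g : Y →L[ℂ] Y) x)
    {M : ℝ} (hM : ∀ g : G, ‖(π g : Y →L[ℂ] Y)‖ ≤ M)
    {m : ℕ} (γ : Fin m → ℝ → G)
    (hγ0 : ∀ j, γ j 0 = 1) (hγadd : ∀ j s t, γ j (s + t) = γ j s * γ j t)
    (hγsmooth : ∀ j, ContMDiff (modelWithCornersSelf ℝ ℝ) I (⊤ : ℕ∞) (γ j))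
    (A : Fin m → (Y →ₗ.[ℂ] Y))
    (hdense : ∀ j, Dense ((A j).domain : Set Y))
    (hdom : ∀ (j) (x : Y),
      (∃ y : Y, HasDerivAt (fun t => (π (γ j t) : Y →L[ℂ] Y) x) y 0) ↔ x ∈ (A j).domain)
    (hgen : ∀ (j) (x : (A j).domain),
      HasDerivAt (fun t => (π (γ j t) : Y →L[ℂ] Y) (x : Y)) (A j x) 0)
    (ξ : StrongDual ℂ Y) (k : ℕ) (hk : 1 ≤ k)
    (hCk : ContMDiff I (modelWithCornersSelf ℝ (StrongDual ℂ Y)) k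
      (fun g => contraDual (π g⁻¹ : Y →L[ℂ] Y) ξ)) :
    ∀ l : List (Fin m), l.length = k → iterAdjMem A l ξ :=
  stmt15_general I π γ hγ0 hγadd hγsmooth A hdense hgen ξ k hCk

end
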